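/- Let γ be a simple zero (f(γ) = 0, f'(γ) ≠ 0) of a function f : ℝ → ℝ that is four times continuously differentiable on an open interval D containing γ. Define the M-4 iteration map by G(x) = y − f(y)/(2·((f(y) − f(x))/(y − x)) − f'(x)), where y = x − f(x)/f'(x). Then, writing c_m = f^{(m)}(γ)/m!, one has (G(x) − γ)/(x − γ)⁴ → −(c₃·c₁ − c₂²)·c₂/c₁³ as x → γ with x ≠ γ. In particular, the iterative method x_{n+1} = G(x_n) is fourth-order convergent with error equation e_{n+1} = −((c₃ c₁ − c₂²) c₂ / c₁³)·e_n⁴ + O(e_n⁵), where e_n = x_n − γ. -/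

import Mathlib

/-!
Write `e = x - γ`, `f x = e (c₁ + e u)`, `f' x = c₁ + e (2u + e w)` and, at the Newton point `y`,
`f y = (y - γ) (c₁ + (y - γ) s)`; Taylor's theorem gives `u, s → c₂` and `w → c₃`. Newton's step
has `y - γ = e² q` with `q = (u + e w) / f' x → c₂ / c₁`. Eliminating `f' x` by the Newton
relation `f' x (x - y) = f x` turns the M-4 error into
`-(y - γ) (f y + e (f y / (y - γ) - f x / e)) / (f x - 2 f y)`, and the Newton relation once more
shows that the bracket is `e³ (w - q (2u + e w) + q (e q + 1) s)`. So `(G x - γ) / e⁴` is a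
quotient of expressions with known limits, and it tends to `-(c₂ / c₁) (c₃ - c₂² / c₁) / c₁`.
-/

open Filter Topology
open scoped Nat

theorem exists_eventually_eq_taylor_add_mul_pow {f : ℝ → ℝ} {s : Set ℝ} {x₀ : ℝ} {n : ℕ}
    (hs : IsOpen s) (hx₀ : x₀ ∈ s) (hf : ContDiffOn ℝ n f s) :
    ∃ ε : ℝ → ℝ, Tendsto ε (𝓝 x₀) (𝓝 0) ∧ ∀ᶠ x in 𝓝 x₀,
      f x = ∑ k ∈ Finset.range (n + 1), iteratedDeriv k f x₀ / k ! * (x - x₀) ^ k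
        + ε x * (x - x₀) ^ n := by
  obtain ⟨r, hr, hball⟩ := Metric.isOpen_iff.1 hs x₀ hx₀
  have hx₀r := Metric.mem_ball_self (x := x₀) hr
  have h := taylor_isLittleO (convex_ball x₀ r) hx₀r (hf.mono hball)
  rw [Metric.isOpen_ball.nhdsWithin_eq hx₀r] at h
  obtain ⟨ε, hε, heq⟩ := Asymptotics.isLittleO_iff_exists_eq_mul.1 h
  refine ⟨ε, hε, heq.mono fun x hx => ?_⟩
  rw [eq_add_of_sub_eq hx, taylor_within_apply, add_comm]
  congr 1
  refine Finset.sum_congr rfl fun k _ => ?_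
  rw [iteratedDerivWithin_of_isOpen Metric.isOpen_ball hx₀r, smul_eq_mul]
  ring

theorem m4_error_eq {e t U V S : ℝ} (he : e ≠ 0) (hU : U ≠ 0) (hNewton : V * (e - t) = e * U)
    (hden : e * U - 2 * t * S ≠ 0) :
    t - t * S / (2 * ((t * S - e * U) / (t - e)) - V)
      = -(t * (S * t + e * (S - U))) / (e * U - 2 * t * S) := by
  have hte : t - e ≠ 0 := fun h =>
    mul_ne_zero he hU (by rw [← hNewton, sub_eq_zero.1 h, sub_self, mul_zero])
  have hQ : 2 * ((t * S - e * U) / (t - e)) - V = V * (e * U - 2 * t * S) / (e * U) := by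
    field_simp
    linear_combination (2 * e * U - 2 * t * S) * hNewton
  have hV : V ≠ 0 := by rintro rfl; exact mul_ne_zero he hU (by simpa using hNewton.symm)
  rw [hQ, eq_div_iff hden, div_div_eq_mul_div, sub_mul, div_mul_eq_mul_div,
    mul_div_mul_right _ _ hden]
  field_simp
  linear_combination t * S * hNewton

noncomputable def newtonMap (f f' : ℝ → ℝ) (x : ℝ) : ℝ := x - f x / f' x

noncomputable def m4Map (f f' : ℝ → ℝ) (x : ℝ) : ℝ :=
  newtonMap f f' x - f (newtonMap f f' x) /
    (2 * ((f (newtonMap f f' x) - f x) / (newtonMap f f' x - x)) - f' x)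

theorem newtonMap_sub_mul_eq {f f' : ℝ → ℝ} {x γ c₁ u w : ℝ}
    (hfx : f x = (x - γ) * (c₁ + (x - γ) * u))
    (hf'x : f' x = c₁ + (x - γ) * (2 * u + (x - γ) * w)) (hV : f' x ≠ 0) :
    (newtonMap f f' x - γ) * f' x = (x - γ) ^ 2 * (u + (x - γ) * w) := by
  rw [newtonMap, sub_right_comm, sub_mul, div_mul_cancel₀ _ hV, hfx, hf'x]
  ring

theorem tendsto_sub_nhdsNE_zero (γ : ℝ) : Tendsto (fun x => x - γ) (𝓝[≠] γ) (𝓝 0) :=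
  tendsto_sub_nhds_zero_iff.2 (tendsto_id'.2 nhdsWithin_le_nhds)

theorem tendsto_const_add_sub_mul {g : ℝ → ℝ} {γ b c : ℝ} (hg : Tendsto g (𝓝[≠] γ) (𝓝 b)) :
    Tendsto (fun x => c + (x - γ) * g x) (𝓝[≠] γ) (𝓝 c) := by
  simpa using ((tendsto_sub_nhdsNE_zero γ).mul hg).const_add c

theorem tendsto_newtonMap_sub_div_sq {f f' u w : ℝ → ℝ} {γ c₁ c₂ c₃ : ℝ} (hc₁ : c₁ ≠ 0)
    (hf : ∀ᶠ x in 𝓝[≠] γ, f x = (x - γ) * (c₁ + (x - γ) * u x)) (hu : Tendsto u (𝓝[≠] γ) (𝓝 c₂))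
    (hf' : ∀ᶠ x in 𝓝[≠] γ, f' x = c₁ + (x - γ) * (2 * u x + (x - γ) * w x))
    (hw : Tendsto w (𝓝[≠] γ) (𝓝 c₃)) :
    Tendsto (fun x => (newtonMap f f' x - γ) / (x - γ) ^ 2) (𝓝[≠] γ) (𝓝 (c₂ / c₁)) := by
  have he := tendsto_sub_nhdsNE_zero γ
  have hV := tendsto_const_add_sub_mul (c := c₁) ((hu.const_mul 2).add (he.mul hw))
  have hq := (hu.add (he.mul hw)).div hV hc₁
  rw [zero_mul, add_zero] at hq
  refine hq.congr' ?_
  filter_upwards [self_mem_nhdsWithin, hf, hf', hV.eventually_ne hc₁] with x hx hfx hf'x hVx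
  rw [Pi.div_apply, div_eq_div_iff hVx (pow_ne_zero 2 (sub_ne_zero.2 hx)), ← hf'x,
    newtonMap_sub_mul_eq hfx hf'x (hf'x ▸ hVx)]
  ring

theorem m4Map_sub_div_pow_four_eq {f f' : ℝ → ℝ} {x γ c₁ q u w s : ℝ} (hx : x ≠ γ)
    (hfx : f x = (x - γ) * (c₁ + (x - γ) * u))
    (hf'x : f' x = c₁ + (x - γ) * (2 * u + (x - γ) * w)) (hV : f' x ≠ 0)
    (hU : c₁ + (x - γ) * u ≠ 0) (hq : newtonMap f f' x = γ + (x - γ) ^ 2 * q)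
    (hfN : f (newtonMap f f' x) = (newtonMap f f' x - γ) * (c₁ + (newtonMap f f' x - γ) * s))
    (hden : c₁ + (x - γ) * u - 2 * ((x - γ) * q) * (c₁ + (x - γ) ^ 2 * q * s) ≠ 0) :
    (m4Map f f' x - γ) / (x - γ) ^ 4
      = -(q * (w - q * (2 * u + (x - γ) * w) + q * ((x - γ) * q + 1) * s)
        / (c₁ + (x - γ) * u - 2 * ((x - γ) * q) * (c₁ + (x - γ) ^ 2 * q * s))) := by
  have he : x - γ ≠ 0 := sub_ne_zero.2 hx
  have hNewton : f' x * ((x - γ) - (x - γ) ^ 2 * q) = (x - γ) * (c₁ + (x - γ) * u) := by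
    rw [← hfx, show (x - γ) - (x - γ) ^ 2 * q = f x / f' x by rw [newtonMap] at hq; linarith,
      mul_div_cancel₀ _ hV]
  have hstep : m4Map f f' x - γ = (x - γ) ^ 2 * q
      - (x - γ) ^ 2 * q * (c₁ + (x - γ) ^ 2 * q * s)
        / (2 * (((x - γ) ^ 2 * q * (c₁ + (x - γ) ^ 2 * q * s) - (x - γ) * (c₁ + (x - γ) * u))
          / ((x - γ) ^ 2 * q - (x - γ))) - f' x) := by
    rw [m4Map, hfN, hfx, hq]
    ring_nf
  have hden' : (x - γ) * (c₁ + (x - γ) * u) - 2 * ((x - γ) ^ 2 * q) * (c₁ + (x - γ) ^ 2 * q * s)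
      = (x - γ) * (c₁ + (x - γ) * u - 2 * ((x - γ) * q) * (c₁ + (x - γ) ^ 2 * q * s)) := by ring
  have hnum : (c₁ + (x - γ) ^ 2 * q * s) * ((x - γ) ^ 2 * q)
        + (x - γ) * ((c₁ + (x - γ) ^ 2 * q * s) - (c₁ + (x - γ) * u))
      = (x - γ) ^ 3 * (w - q * (2 * u + (x - γ) * w) + q * ((x - γ) * q + 1) * s) := by
    rw [hf'x] at hNewton
    linear_combination -hNewton
  rw [hstep, m4_error_eq he hU hNewton (hden'.symm ▸ mul_ne_zero he hden), hden', hnum, div_div,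
    neg_div, neg_inj, div_eq_div_iff (by positivity) hden]
  ring

theorem tendsto_newtonMap {f f' u w : ℝ → ℝ} {γ c₁ c₂ c₃ : ℝ} (hc₁ : c₁ ≠ 0)
    (hf : ∀ᶠ x in 𝓝[≠] γ, f x = (x - γ) * (c₁ + (x - γ) * u x)) (hu : Tendsto u (𝓝[≠] γ) (𝓝 c₂))
    (hf' : ∀ᶠ x in 𝓝[≠] γ, f' x = c₁ + (x - γ) * (2 * u x + (x - γ) * w x))
    (hw : Tendsto w (𝓝[≠] γ) (𝓝 c₃)) :
    Tendsto (newtonMap f f') (𝓝[≠] γ) (𝓝 γ) := by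
  have h := ((tendsto_newtonMap_sub_div_sq hc₁ hf hu hf' hw).mul
    ((tendsto_sub_nhdsNE_zero γ).pow 2)).add_const γ
  rw [zero_pow two_ne_zero, mul_zero, zero_add] at h
  refine h.congr' ?_
  filter_upwards [self_mem_nhdsWithin] with x hx
  rw [div_mul_cancel₀ _ (pow_ne_zero 2 (sub_ne_zero.2 hx)), sub_add_cancel]

/-- The hypotheses hold, with `u x = c₂ + c₃ e + o(e)`, when `e = x - γ`,
`f x = c₁ e + c₂ e² + c₃ e³ + o(e³)` and `f' x = c₁ + 2 c₂ e + 3 c₃ e² + o(e²)`. -/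
theorem tendsto_m4Map_sub_div_pow_four {f f' u w : ℝ → ℝ} {γ c₁ c₂ c₃ : ℝ} (hc₁ : c₁ ≠ 0)
    (hf : ∀ᶠ x in 𝓝 γ, f x = (x - γ) * (c₁ + (x - γ) * u x)) (hu : Tendsto u (𝓝 γ) (𝓝 c₂))
    (hf' : ∀ᶠ x in 𝓝[≠] γ, f' x = c₁ + (x - γ) * (2 * u x + (x - γ) * w x))
    (hw : Tendsto w (𝓝[≠] γ) (𝓝 c₃)) :
    Tendsto (fun x => (m4Map f f' x - γ) / (x - γ) ^ 4) (𝓝[≠] γ)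
      (𝓝 (-((c₃ * c₁ - c₂ ^ 2) * c₂ / c₁ ^ 3))) := by
  have hl : 𝓝[≠] γ ≤ 𝓝 γ := nhdsWithin_le_nhds
  have he := tendsto_sub_nhdsNE_zero γ
  have hul := hu.mono_left hl
  set N := newtonMap f f'
  set q : ℝ → ℝ := fun x => (N x - γ) / (x - γ) ^ 2
  have hq : Tendsto q (𝓝[≠] γ) (𝓝 (c₂ / c₁)) :=
    tendsto_newtonMap_sub_div_sq hc₁ (hl hf) hul hf' hw
  have heq : Tendsto (fun x => (x - γ) * q x) (𝓝[≠] γ) (𝓝 0) := by simpa using he.mul hq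
  have hN : Tendsto N (𝓝[≠] γ) (𝓝 γ) := tendsto_newtonMap hc₁ (hl hf) hul hf' hw
  have hs : Tendsto (fun x => u (N x)) (𝓝[≠] γ) (𝓝 c₂) := hu.comp hN
  have hK : Tendsto (fun x => w x - q x * (2 * u x + (x - γ) * w x)
      + q x * ((x - γ) * q x + 1) * u (N x)) (𝓝[≠] γ) (𝓝 ((c₃ * c₁ - c₂ ^ 2) / c₁)) := by
    convert (hw.sub (hq.mul ((hul.const_mul 2).add (he.mul hw)))).add
      ((hq.mul (heq.add_const 1)).mul hs) using 2
    field_simp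
    ring
  have hU := tendsto_const_add_sub_mul (c := c₁) hul
  have hV := tendsto_const_add_sub_mul (c := c₁) ((hul.const_mul 2).add (he.mul hw))
  have hden : Tendsto (fun x => c₁ + (x - γ) * u x
      - 2 * ((x - γ) * q x) * (c₁ + (x - γ) ^ 2 * q x * u (N x))) (𝓝[≠] γ) (𝓝 c₁) := by
    convert hU.sub ((heq.const_mul 2).mul (tendsto_const_add_sub_mul (c := c₁) (heq.mul hs)))
      using 2 <;> ring
  convert ((hq.mul hK).div hden hc₁).neg.congr' ?_ using 2
  · field_simp
  filter_upwards [self_mem_nhdsWithin, hl hf, hf', hN.eventually hf, hU.eventually_ne hc₁,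
    hV.eventually_ne hc₁, hden.eventually_ne hc₁] with x hx hfx hf'x hfN hUx hVx hdenx
  refine (m4Map_sub_div_pow_four_eq hx hfx hf'x (hf'x ▸ hVx) hUx ?_ hfN hdenx).symm
  rw [mul_div_cancel₀ _ (pow_ne_zero 2 (sub_ne_zero.2 hx)), add_sub_cancel]

theorem stmt_8_general (f : ℝ → ℝ) (D : Set ℝ) (hD : IsOpen D)
    (γ : ℝ) (hγ : γ ∈ D) (hf : ContDiffOn ℝ 4 f D)
    (hf0 : f γ = 0) (hf' : deriv f γ ≠ 0)
    (c : ℕ → ℝ) (hc : ∀ m, c m = iteratedDeriv m f γ / (Nat.factorial m))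
    (G : ℝ → ℝ)
    (hG : ∀ x, G x =
      (x - f x / deriv f x) -
        f (x - f x / deriv f x) /
          (2 * ((f (x - f x / deriv f x) - f x) / ((x - f x / deriv f x) - x))
            - deriv f x)) :
    Tendsto (fun x => (G x - γ) / (x - γ) ^ 4) (𝓝[≠] γ)
      (𝓝 (-((c 3 * c 1 - (c 2) ^ 2) * c 2 / (c 1) ^ 3))) := by
  have hc₁ : c 1 ≠ 0 := by simpa [hc] using hf'
  obtain ⟨ε, hε, hfε⟩ := exists_eventually_eq_taylor_add_mul_pow hD hγ (n := 3)
    (hf.of_le (by norm_num))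
  obtain ⟨δ, hδ, hf'δ⟩ := exists_eventually_eq_taylor_add_mul_pow hD hγ (n := 2)
    (hf.deriv_of_isOpen hD (by norm_num))
  have hdc : ∀ k, iteratedDeriv k (deriv f) γ / k ! = (k + 1) * c (k + 1) := by
    intro k
    rw [← iteratedDeriv_succ', hc, Nat.factorial_succ]
    push_cast
    field_simp
  rw [show G = m4Map f (deriv f) from funext hG]
  refine tendsto_m4Map_sub_div_pow_four (u := fun x => c 2 + (c 3 + ε x) * (x - γ))
    (w := fun x => c 3 + δ x - 2 * ε x) hc₁ ?_ ?_ ?_ ?_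
  · filter_upwards [hfε] with x hx
    simp only [hx, Finset.sum_range_succ, Finset.sum_range_zero, iteratedDeriv_zero, hf0,
      zero_div, zero_mul, zero_add]
    rw [← hc 1, ← hc 2, ← hc 3]
    ring
  · simpa using tendsto_const_nhds.add ((tendsto_const_nhds.add hε).mul (tendsto_id.sub_const γ))
  · filter_upwards [nhdsWithin_le_nhds hf'δ] with x hx
    simp only [hx, Finset.sum_range_succ, Finset.sum_range_zero, hdc]
    ring
  · simpa using ((tendsto_const_nhds.add hδ).sub (hε.const_mul 2)).mono_left nhdsWithin_le_nhds

/-- Fourth-order convergence of the method M-4: for a simple zero `γ` of a `C⁴`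
function `f` on an open interval `D`, the M-4 map `G` satisfies
`(G x - γ)/(x - γ)⁴ → -((c₃ c₁ - c₂²) c₂ / c₁³)` as `x → γ`, `x ≠ γ`,
where `c m = f⁽ᵐ⁾(γ)/m!`. -/
theorem stmt_8 (f : ℝ → ℝ) (D : Set ℝ) (hD : IsOpen D) (hDconn : D.OrdConnected)
    (γ : ℝ) (hγ : γ ∈ D) (hf : ContDiffOn ℝ 4 f D)
    (hf0 : f γ = 0) (hf' : deriv f γ ≠ 0)
    (c : ℕ → ℝ) (hc : ∀ m, c m = iteratedDeriv m f γ / (Nat.factorial m))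
    (G : ℝ → ℝ)
    (hG : ∀ x, G x =
      (x - f x / deriv f x) -
        f (x - f x / deriv f x) /
          (2 * ((f (x - f x / deriv f x) - f x) / ((x - f x / deriv f x) - x))
            - deriv f x)) :
    Tendsto (fun x => (G x - γ) / (x - γ) ^ 4) (𝓝[≠] γ)
      (𝓝 (-((c 3 * c 1 - (c 2) ^ 2) * c 2 / (c 1) ^ 3))) :=
  stmt_8_general f D hD γ hγ hf hf0 hf' c hc G hG
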